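/- arXiv:1406.5721 — 4 statements merged into one kernel-verified Lean document; each statement's English description precedes it below -/
import Mathlib

section
/- Let x ∈ ℍ be a fixed quaternion and let f : ℍ → ℍ be the function f(w) = w·x·x*·w*. Then the HR*-derivative of f at every point w equals (1/2)·w·x·x*; that is, ∂(w·x·x*·w*)/∂w* = (1/2)·w·x·x*. -/
open Quaternion

/-- The imaginary unit `i` of the real quaternions. -/
def qI : ℍ[ℝ] := ⟨0, 1, 0, 0⟩

/-- The imaginary unit `j` of the real quaternions. -/
def qJ : ℍ[ℝ] := ⟨0, 0, 1, 0⟩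

/-- The imaginary unit `k` of the real quaternions. -/
def qK : ℍ[ℝ] := ⟨0, 0, 0, 1⟩

/-- The HR*-derivative of `f : ℍ → ℍ` at `q`:
`(1/4) (D₁ f(q) + (Dᵢ f(q))·i + (Dⱼ f(q))·j + (Dₖ f(q))·k)`,
where `D_v f(q)` is the real Fréchet derivative of `f` at `q` in direction `v`. -/
noncomputable def HRStarDeriv (f : ℍ[ℝ] → ℍ[ℝ]) (q : ℍ[ℝ]) : ℍ[ℝ] :=
  (4 : ℍ[ℝ])⁻¹ * (fderiv ℝ f q 1 + fderiv ℝ f q qI * qI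
    + fderiv ℝ f q qJ * qJ + fderiv ℝ f q qK * qK)

/-!
Writing `c = x x*`, the map `f v = v c v*` has real derivative `D_h f(w) = w c h* + h c w*`.
For each unit `u ∈ {1, i, j, k}` we have `u* u = 1`, so `D_u f(w) u = w c + u (c w*) u`, and the
sandwich identity `q + i q i + j q j + k q k = -2 q*` sums these to `4 w c - 2 w c*`.
Since `c` is self-adjoint, a quarter of this is `(1/2) w c`.
-/

instance : StarModule ℝ ℍ[ℝ] := ⟨Quaternion.star_smul⟩

theorem inv_ofNat_mul_eq_smul {K A : Type*} [Field K] [DivisionRing A] [Algebra K A]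
    (n : ℕ) [n.AtLeastTwo] (a : A) : (ofNat(n) : A)⁻¹ * a = (ofNat(n) : K)⁻¹ • a := by
  rw [Algebra.smul_def, map_inv₀, map_ofNat]

theorem fderiv_mul_mul_star_apply {A : Type*} [NormedRing A] [NormedAlgebra ℝ A] [StarRing A]
    [StarModule ℝ A] [ContinuousStar A] (c w h : A) :
    fderiv ℝ (fun v => v * c * star v) w h = w * c * star h + h * c * star w := by
  have hf : HasFDerivAt (fun v : A => v * c * star v) _ w :=
    ((hasFDerivAt_id (𝕜 := ℝ) w).mul_const' c).mul' (hasFDerivAt_id w).star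
  simp [hf.fderiv]

theorem star_qI_mul_qI : star qI * qI = 1 := by
  rw [star_mul_self, normSq_def']
  simp [qI]

theorem star_qJ_mul_qJ : star qJ * qJ = 1 := by
  rw [star_mul_self, normSq_def']
  simp [qJ]

theorem star_qK_mul_qK : star qK * qK = 1 := by
  rw [star_mul_self, normSq_def']
  simp [qK]

theorem add_basis_mul_self_mul (q : ℍ[ℝ]) :
    q + qI * q * qI + qJ * q * qJ + qK * q * qK = -(2 : ℝ) • star q := by
  ext <;>
    simp only [re_add, imI_add, imJ_add, imK_add, re_mul, imI_mul, imJ_mul, imK_mul,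
      re_smul, imI_smul, imJ_smul, imK_smul, re_star, imI_star, imJ_star, imK_star, smul_eq_mul] <;>
    simp only [qI, qJ, qK] <;>
    ring

theorem hrStarDeriv_mul_mul_star (c w : ℍ[ℝ]) :
    HRStarDeriv (fun v => v * c * star v) w = w * c - (2 : ℝ)⁻¹ • (w * star c) := by
  have unit_dir : ∀ u : ℍ[ℝ], star u * u = 1 →
      (w * c * star u + u * c * star w) * u = w * c + u * (c * star w) * u := by
    intro u hu
    rw [add_mul, mul_assoc (w * c), hu, mul_one, mul_assoc u c]
  have sandwich := add_basis_mul_self_mul (c * star w)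
  rw [star_mul, star_star] at sandwich
  rw [HRStarDeriv, inv_ofNat_mul_eq_smul (K := ℝ)]
  simp only [fderiv_mul_mul_star_apply, star_one, mul_one, one_mul,
    unit_dir qI star_qI_mul_qI, unit_dir qJ star_qJ_mul_qJ, unit_dir qK star_qK_mul_qK]
  linear_combination (norm := module) (4 : ℝ)⁻¹ • sandwich

/-- ∂(w·x·x*·w*)/∂w* = (1/2)·w·x·x*. -/
theorem hr_star_deriv_quadratic (x : ℍ[ℝ]) (w : ℍ[ℝ]) :
    HRStarDeriv (fun v => v * x * star x * star v) w = (2 : ℍ[ℝ])⁻¹ * (w * x * star x) := by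
  have hf : (fun v => v * x * star x * star v) = fun v => v * (x * star x) * star v := by
    funext v
    rw [mul_assoc v x]
  rw [hf, hrStarDeriv_mul_mul_star, star_mul, star_star, inv_ofNat_mul_eq_smul (K := ℝ),
    ← mul_assoc]
  module
end

section
/- Let f : ℍ → ℍ be the function f(w) = |w| (the quaternion norm of w, regarded as a real quaternion). Then at every point w ≠ 0, the HR*-derivative of f equals (1/4)·w/|w|; that is, ∂|w|/∂w* = (1/4)·sgn(w), where sgn(w) = w/|w| for w ≠ 0. -/
open Quaternion

/-! For a real-valued `g`, the directional derivatives along the orthonormal basis `1, i, j, k`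
are the coordinates `⟪∇g, e⟫` of the gradient, so the HR*-derivative `¼ Σ ⟪∇g, e⟫ e` is `¼ ∇g`.
The gradient of the norm away from `0` is `w / ‖w‖`. -/

open RealInnerProductSpace

theorem hasGradientAt_norm {E : Type*} [NormedAddCommGroup E] [InnerProductSpace ℝ E]
    [CompleteSpace E] {x : E} (hx : x ≠ 0) : HasGradientAt (‖·‖) (‖x‖⁻¹ • x) x := by
  have hsqrt := (hasStrictFDerivAt_norm_sq x).hasFDerivAt.sqrt (by positivity)
  simp only [Real.sqrt_sq (norm_nonneg _)] at hsqrt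
  rw [hasGradientAt_iff_hasFDerivAt]
  refine hsqrt.congr_fderiv ?_
  ext v
  simp
  field_simp

theorem Quaternion.sum_inner_mul_basis_eq_self (q : ℍ[ℝ]) :
    (⟪q, 1⟫ : ℍ[ℝ]) + ⟪q, qI⟫ * qI + ⟪q, qJ⟫ * qJ + ⟪q, qK⟫ * qK = q := by
  ext <;> simp [Quaternion.inner_def] <;> simp [qI, qJ, qK]

theorem HasGradientAt.hrStarDeriv_coe {g : ℍ[ℝ] → ℝ} {g' q : ℍ[ℝ]} (h : HasGradientAt g g' q) :
    HRStarDeriv (fun v => (g v : ℍ[ℝ])) q = 4⁻¹ * g' := by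
  have hcoe : (fun v => (g v : ℍ[ℝ])) = fun v => g v • (1 : ℍ[ℝ]) :=
    funext fun v => by rw [← Quaternion.coe_mul_eq_smul, mul_one]
  have hderiv (v : ℍ[ℝ]) : fderiv ℝ (fun v => (g v : ℍ[ℝ])) q v = (⟪g', v⟫ : ℍ[ℝ]) := by
    rw [hcoe, (h.hasFDerivAt.smul_const (1 : ℍ[ℝ])).fderiv]
    simp [← Quaternion.coe_mul_eq_smul]
  simp only [HRStarDeriv, hderiv, Quaternion.sum_inner_mul_basis_eq_self]

/-- ∂|w|/∂w* = (1/4)·w/|w| for w ≠ 0. -/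
theorem hr_star_deriv_norm (w : ℍ[ℝ]) (hw : w ≠ 0) :
    HRStarDeriv (fun v => ((‖v‖ : ℝ) : ℍ[ℝ])) w = (4 : ℍ[ℝ])⁻¹ * (w / ((‖w‖ : ℝ) : ℍ[ℝ])) := by
  rw [(hasGradientAt_norm hw).hrStarDeriv_coe, div_eq_mul_inv, ← Quaternion.coe_inv,
    ← Quaternion.coe_mul_eq_smul, Quaternion.coe_commute]
end

section
/- Let d, x ∈ ℍ be fixed quaternions and define e(w) = d − w·x for w ∈ ℍ. Then the HR*-derivative at every point w of the function w ↦ e(w)·e(w)* equals −(1/2)·e(w)·x*; that is, ∂(e·e*)/∂w* = −(1/2)·e·x*. -/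
/-!
The real derivative of `e e*` in direction `h` is `-(e x* h* + h x e*)`. For a derivative of the
shape `h ↦ a h* + h b`, the HR*-combination `D₁ + Dᵢ i + Dⱼ j + Dₖ k` equals `4a - 2b*`, because
`v* v = 1` for each basis unit `v` and `b + i b i + j b j + k b k = -2 b*`. Here `a = -e x*` and
`b* = -e x*`, which gives `-2 e x*`, and the factor `1/4` yields `-(1/2) e x*`.
-/

open Quaternion

instance {R : Type*} [CommRing R] [StarRing R] [TrivialStar R] : StarModule R ℍ[R] :=
  ⟨fun r a => by rw [Quaternion.star_smul, star_trivial r]⟩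

instance {R : Type*} [CommRing R] [CharZero R] : CharZero ℍ[R] :=
  charZero_of_injective_algebraMap Quaternion.coe_injective

theorem HasFDerivAt.fderiv_mul_star_apply {𝕜 E A : Type*} [NontriviallyNormedField 𝕜]
    [StarRing 𝕜] [TrivialStar 𝕜] [NormedAddCommGroup E] [NormedSpace 𝕜 E] [NormedRing A]
    [NormedAlgebra 𝕜 A] [StarRing A] [StarModule 𝕜 A] [ContinuousStar A] {f : E → A}
    {f' : E →L[𝕜] A} {w : E} (hf : HasFDerivAt f f' w) (h : E) :
    fderiv 𝕜 (fun v => f v * star (f v)) w h = f w * star (f' h) + f' h * star (f w) := by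
  rw [show (fun v => f v * star (f v)) = f * fun v => star (f v) from rfl,
    (hf.mul' hf.star).fderiv]
  simp

theorem add_qI_mul_mul_qI_add_qJ_mul_mul_qJ_add_qK_mul_mul_qK (q : ℍ[ℝ]) :
    q + qI * q * qI + qJ * q * qJ + qK * q * qK = -2 * star q := by
  rw [neg_mul, two_mul]
  ext <;> simp <;> simp [qI, qJ, qK]

theorem HRStarDeriv_eq_of_fderiv_apply {f : ℍ[ℝ] → ℍ[ℝ]} {q a b : ℍ[ℝ]}
    (hf : ∀ h, fderiv ℝ f q h = a * star h + h * b) : HRStarDeriv f q = a - 2⁻¹ * star b := by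
  have hsum : fderiv ℝ f q 1 + fderiv ℝ f q qI * qI + fderiv ℝ f q qJ * qJ
      + fderiv ℝ f q qK * qK = 4 * a - 2 * star b := by
    simp only [hf, add_mul, mul_assoc, star_qI_mul_qI, star_qJ_mul_qJ, star_qK_mul_qK, star_one]
    rw [sub_eq_add_neg, ← neg_mul, ← add_qI_mul_mul_qI_add_qJ_mul_mul_qJ_add_qK_mul_mul_qK]
    noncomm_ring
  rw [HRStarDeriv, hsum, mul_sub, ← mul_assoc, ← mul_assoc]
  norm_num

/-- With e(w) = d − w·x, we have ∂(e·e*)/∂w* = −(1/2)·e·x*. -/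
theorem hr_star_deriv_error_sq (d x w : ℍ[ℝ]) :
    HRStarDeriv (fun v => (d - v * x) * star (d - v * x)) w
      = -(2 : ℍ[ℝ])⁻¹ * ((d - w * x) * star x) := by
  have he : HasFDerivAt (fun v => d - v * x) (-(ContinuousLinearMap.id ℝ ℍ[ℝ]).smulRight x) w :=
    ((hasFDerivAt_const d w).sub ((hasFDerivAt_id w).mul_const' x)).congr_fderiv
      (ContinuousLinearMap.ext fun h => by simp)
  have hD : ∀ h, fderiv ℝ (fun v => (d - v * x) * star (d - v * x)) w h
      = -((d - w * x) * star x) * star h + h * -(x * star (d - w * x)) := by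
    intro h
    rw [he.fderiv_mul_star_apply]
    simp only [neg_apply, ContinuousLinearMap.smulRight_apply, ContinuousLinearMap.id_apply,
      smul_eq_mul, star_neg, star_mul]
    noncomm_ring
  rw [HRStarDeriv_eq_of_fderiv_apply hD, star_neg, star_mul, star_star, mul_neg, sub_neg_eq_add,
    ← neg_one_mul ((d - w * x) * star x), ← add_mul]
  norm_num
end

section
/- Let d, x ∈ ℍ be fixed quaternions, let γ > 0 be a real constant, define e(w) = d − w·x, and consider the cost function J₀(w) = e(w)·e(w)* + γ·|w|. Then at every point w ≠ 0, the HR*-derivative of J₀ equals −(1/2)·e(w)·x* + (1/4)·γ·w/|w|. -/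
open Quaternion

instance inst_s9 : StarModule ℝ ℍ[ℝ] := ⟨fun r a => (Quaternion.star_smul r a).trans rfl⟩

@[simp] lemma qI_re : qI.re = 0 := rfl
@[simp] lemma qI_imI : qI.imI = 1 := rfl
@[simp] lemma qI_imJ : qI.imJ = 0 := rfl
@[simp] lemma qI_imK : qI.imK = 0 := rfl
@[simp] lemma qJ_re : qJ.re = 0 := rfl
@[simp] lemma qJ_imI : qJ.imI = 0 := rfl
@[simp] lemma qJ_imJ : qJ.imJ = 1 := rfl
@[simp] lemma qJ_imK : qJ.imK = 0 := rfl
@[simp] lemma qK_re : qK.re = 0 := rfl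
@[simp] lemma qK_imI : qK.imI = 0 := rfl
@[simp] lemma qK_imJ : qK.imJ = 0 := rfl
@[simp] lemma qK_imK : qK.imK = 1 := rfl

set_option maxHeartbeats 2000000 in
set_option synthInstance.maxHeartbeats 100000 in
/-- With e(w) = d − w·x and J₀(w) = e(w)·e(w)* + γ·|w|, at every w ≠ 0,
∂J₀/∂w* = −(1/2)·e(w)·x* + (1/4)·γ·w/|w|. -/
theorem hr_star_deriv_cost (d x : ℍ[ℝ]) (γ : ℝ) (hγ : 0 < γ) (w : ℍ[ℝ]) (hw : w ≠ 0) :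
    HRStarDeriv (fun v => (d - v * x) * star (d - v * x) + ((γ : ℍ[ℝ]) * ((‖v‖ : ℝ) : ℍ[ℝ]))) w
      = -(2 : ℍ[ℝ])⁻¹ * ((d - w * x) * star x)
        + (4 : ℍ[ℝ])⁻¹ * (γ : ℍ[ℝ]) * (w / ((‖w‖ : ℝ) : ℍ[ℝ])) := by
  have h1 : HasFDerivAt (fun v : ℍ[ℝ] => v * x)
      ((ContinuousLinearMap.id ℝ ℍ[ℝ]).smulRight x) w := (hasFDerivAt_id w).mul_const' x
  have hG : HasFDerivAt (fun v : ℍ[ℝ] => d - v * x)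
      (-((ContinuousLinearMap.id ℝ ℍ[ℝ]).smulRight x)) w := by
    exact ((hasFDerivAt_const d w).sub h1).congr_fderiv (zero_sub _)
  have hStar : HasFDerivAt (fun v : ℍ[ℝ] => star (d - v * x))
      (((starL' ℝ : ℍ[ℝ] ≃L[ℝ] ℍ[ℝ]) : ℍ[ℝ] →L[ℝ] ℍ[ℝ]).comp
        (-((ContinuousLinearMap.id ℝ ℍ[ℝ]).smulRight x))) w :=
    (((starL' ℝ : ℍ[ℝ] ≃L[ℝ] ℍ[ℝ]) : ℍ[ℝ] →L[ℝ] ℍ[ℝ]).hasFDerivAt).comp w hG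
  have hmul := hG.mul' hStar
  have h2 : HasFDerivAt (fun v : ℍ[ℝ] => ‖v‖ ^ 2) (2 • innerSL ℝ w) w :=
    (hasStrictFDerivAt_norm_sq w).hasFDerivAt
  have hs : HasDerivAt Real.sqrt (1 / (2 * Real.sqrt (‖w‖ ^ 2))) (‖w‖ ^ 2) :=
    Real.hasDerivAt_sqrt (pow_ne_zero 2 (norm_ne_zero_iff.mpr hw))
  have hn0 := hs.comp_hasFDerivAt w h2
  have hn : HasFDerivAt (fun v : ℍ[ℝ] => ‖v‖)
      ((1 / (2 * ‖w‖)) • (2 • innerSL ℝ w)) w := by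
    simpa [Function.comp_def, Real.sqrt_sq, norm_nonneg] using hn0
  have hcoe := ((algebraMapCLM ℝ ℍ[ℝ]).hasFDerivAt.comp w hn).const_mul (γ : ℍ[ℝ])
  have hcoe' : HasFDerivAt (fun v : ℍ[ℝ] => (γ : ℍ[ℝ]) * ((‖v‖ : ℝ) : ℍ[ℝ]))
      ((γ : ℍ[ℝ]) • ((algebraMapCLM ℝ ℍ[ℝ]).comp ((1 / (2 * ‖w‖)) • (2 • innerSL ℝ w)))) w := by
    simpa [Function.comp_def, Quaternion.algebraMap_def] using hcoe
  have htot := hmul.add hcoe'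
  have hwn : ‖w‖ ≠ 0 := norm_ne_zero_iff.mpr hw
  rw [HRStarDeriv, HasFDerivAt.fderiv (f := fun v : ℍ[ℝ] => (d - v * x) * star (d - v * x) + ((γ : ℍ[ℝ]) * ((‖v‖ : ℝ) : ℍ[ℝ]))) htot]
  simp only [ContinuousLinearMap.add_apply, ContinuousLinearMap.smul_apply,
    ContinuousLinearMap.comp_apply, ContinuousLinearMap.smulRight_apply,
    ContinuousLinearMap.coe_coe, ContinuousLinearMap.neg_apply,
    ContinuousLinearMap.coe_id', id_eq, starL'_apply, innerSL_apply_apply,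
    Quaternion.inner_def, algebraMapCLM_apply, Quaternion.algebraMap_def]
  have h4 : (4:ℍ[ℝ])⁻¹ = ((4⁻¹:ℝ):ℍ[ℝ]) := by
    rw [Quaternion.coe_inv]; rfl
  have h2' : (2:ℍ[ℝ])⁻¹ = ((2⁻¹:ℝ):ℍ[ℝ]) := by
    rw [Quaternion.coe_inv]; rfl
  rw [show w / ((‖w‖:ℝ):ℍ[ℝ]) = (‖w‖⁻¹:ℝ) • w from by
    rw [div_eq_mul_inv, ← Quaternion.coe_inv, Quaternion.mul_coe_eq_smul], h4, h2']
  have hstarL : ∀ a : ℍ[ℝ], ((starL' ℝ : ℍ[ℝ] ≃L[ℝ] ℍ[ℝ]) : ℍ[ℝ] →L[ℝ] ℍ[ℝ]) a = star a :=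
    fun a => rfl
  simp only [hstarL, smul_eq_mul, op_smul_eq_mul, one_mul, star_neg, star_mul]
  simp only [neg_mul, Quaternion.coe_mul_eq_smul, Quaternion.smul_coe, smul_mul_assoc]
  ext <;>
    simp only [Quaternion.re_add, Quaternion.imI_add, Quaternion.imJ_add, Quaternion.imK_add,
      Quaternion.re_neg, Quaternion.imI_neg, Quaternion.imJ_neg, Quaternion.imK_neg,
      Quaternion.re_sub, Quaternion.imI_sub, Quaternion.imJ_sub, Quaternion.imK_sub,
      Quaternion.re_mul, Quaternion.imI_mul, Quaternion.imJ_mul, Quaternion.imK_mul,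
      Quaternion.re_smul, Quaternion.imI_smul, Quaternion.imJ_smul, Quaternion.imK_smul,
      Quaternion.re_coe, Quaternion.imI_coe, Quaternion.imJ_coe, Quaternion.imK_coe,
      Quaternion.re_star, Quaternion.imI_star, Quaternion.imJ_star, Quaternion.imK_star,
      Quaternion.re_one, Quaternion.imI_one, Quaternion.imJ_one, Quaternion.imK_one,
      qI_re, qI_imI, qI_imJ, qI_imK, qJ_re, qJ_imI, qJ_imJ, qJ_imK,
      qK_re, qK_imI, qK_imJ, qK_imK, smul_eq_mul, nsmul_eq_mul, Nat.cast_ofNat] <;>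
    field_simp <;> ring
end
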